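/- arXiv:2602.09577 — 5 statements merged into one kernel-verified Lean document; each statement's English description precedes it below -/
import Mathlib

section
/- For q ∈ {2,3} and k ≥ 4, the generator matrix of any [2k, k, k]_q linear code has no repeated columns (no two columns are equal). -/
/-!
Suppose columns `j₁ ≠ j₂` of `G` coincide. Pick a set `T` of `k - 2` positions containing `j₁`
but not `j₂`. The messages whose codewords vanish on `T` form a space `V` of dimension at least
`2`, and these codewords also vanish at `j₂`, so on `k - 1` positions. As a nonzero codeword has
at most `k` zeros, it vanishes at most once on the remaining `k + 1` positions: the kernels of the
corresponding `k + 1` coordinate functionals on `V` meet only in `0`. Each kernel has at least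
`q ^ (dim V - 1)` elements, and counting nonzero vectors of `V` leaves room for at most `q + 1`
such functionals (the length bound for two-dimensional MDS codes). Hence `k ≤ q < 4`.
-/

open Module Finset Matrix

section
variable {F V ι : Type*} [Field F] [Fintype F] [AddCommGroup V] [Module F V]
  [FiniteDimensional F V]

theorem pow_finrank_sub_one_le_card_ker (f : V →ₗ[F] F) [Fintype (LinearMap.ker f)] :
    Fintype.card F ^ (finrank F V - 1) ≤ Fintype.card (LinearMap.ker f) := by
  have hrange : finrank F (LinearMap.range f) ≤ 1 :=
    (Submodule.finrank_le _).trans (finrank_self F).le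
  rw [Module.card_eq_pow_finrank (K := F) (V := LinearMap.ker f)]
  exact Nat.pow_le_pow_right Fintype.card_pos (by have := f.finrank_range_add_finrank_ker; omega)

theorem card_le_card_add_one_of_pairwiseDisjoint_ker (hV : 2 ≤ finrank F V)
    (f : ι → V →ₗ[F] F) (s : Finset ι)
    (hs : (s : Set ι).PairwiseDisjoint fun i => LinearMap.ker (f i)) :
    #s ≤ Fintype.card F + 1 := by
  classical
  have : Fintype V := @Fintype.ofFinite V (Module.finite_of_finite F)
  set q := Fintype.card F
  set x := q ^ (finrank F V - 1)
  have hq : 2 ≤ q := Fintype.one_lt_card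
  have hcardV : Fintype.card V = q * x := by
    rw [Module.card_eq_pow_finrank (K := F), ← pow_succ']; congr 1; omega
  have hx : q ≤ x := Nat.le_self_pow (by omega) q
  let K : ι → Finset V := fun i => {v | f i v = 0 ∧ v ≠ 0}
  have hK : ∀ i, x - 1 ≤ #(K i) := by
    intro i
    have h : x ≤ Fintype.card (LinearMap.ker (f i)) := pow_finrank_sub_one_le_card_ker (f i)
    have : K i = (univ.filter (· ∈ LinearMap.ker (f i))).erase 0 := by ext v; simp [K, and_comm]
    rw [this, card_erase_of_mem (by simp), ← Fintype.card_subtype, Fintype.card_congr' rfl]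
    omega
  have hdisj : (s : Set ι).PairwiseDisjoint K := by
    intro i hi j hj hij
    refine Finset.disjoint_left.mpr fun v hvi hvj => ?_
    simp only [K, mem_filter, mem_univ, true_and] at hvi hvj
    exact hvi.2 (Submodule.disjoint_def.mp (hs hi hj hij) v hvi.1 hvj.1)
  have hsum : #s * (x - 1) ≤ q * x - 1 := calc
    #s * (x - 1) ≤ ∑ i ∈ s, #(K i) := by
      rw [← smul_eq_mul, ← sum_const]; exact sum_le_sum fun i _ => hK i
    _ = #(s.biUnion K) := (card_biUnion hdisj).symm
    _ ≤ #(univ.erase (0 : V)) := card_le_card fun v hv => by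
      obtain ⟨i, -, hv⟩ := mem_biUnion.mp hv; simp_all [K]
    _ = q * x - 1 := by rw [card_erase_of_mem (mem_univ _), card_univ, hcardV]
  by_contra! h
  have : (q + 2) * (x - 1) ≤ q * x - 1 := (Nat.mul_le_mul_right _ h).trans hsum
  zify [show 1 ≤ x by omega, show 1 ≤ q * x by nlinarith] at this
  nlinarith
end

theorem hammingNorm_le_card_compl {ι β : Type*} [Fintype ι] [DecidableEq ι] [Zero β]
    [DecidableEq β] {x : ι → β} {Z : Finset ι} (hx : ∀ j ∈ Z, x j = 0) :
    hammingNorm x ≤ #Zᶜ :=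
  card_le_card fun j hj => mem_compl.mpr fun hjZ => (mem_filter.mp hj).2 (hx j hjZ)

section
variable {F κ ι : Type*} [Field F] [Fintype κ]

def vanishingMessages (G : Matrix κ ι F) (T : Finset ι) : Submodule F (κ → F) :=
  LinearMap.ker ((LinearMap.funLeft F F ((↑) : T → ι)).comp G.vecMulLinear)

theorem mem_vanishingMessages {G : Matrix κ ι F} {T : Finset ι} {u : κ → F} :
    u ∈ vanishingMessages G T ↔ ∀ j ∈ T, (u ᵥ* G) j = 0 := by
  simp [vanishingMessages, funext_iff, LinearMap.funLeft_apply]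

theorem card_sub_card_le_finrank_vanishingMessages (G : Matrix κ ι F) (T : Finset ι) :
    Fintype.card κ - #T ≤ finrank F (vanishingMessages G T) := by
  let φ := (LinearMap.funLeft F F ((↑) : T → ι)).comp G.vecMulLinear
  have hrange : finrank F (LinearMap.range φ) ≤ #T := by
    simpa using Submodule.finrank_le (LinearMap.range φ)
  have := LinearMap.finrank_range_add_finrank_ker φ
  rw [finrank_pi] at this
  change _ ≤ finrank F (LinearMap.ker φ)
  omega

theorem pairwiseDisjoint_ker_vecMul_apply [DecidableEq F] [Fintype ι] [DecidableEq ι]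
    {G : Matrix κ ι F} {d : ℕ}
    (hdist : ∀ u : κ → F, u ≠ 0 → d ≤ hammingNorm (u ᵥ* G))
    {V : Submodule F (κ → F)} {Z : Finset ι} (hV : ∀ u ∈ V, ∀ j ∈ Z, (u ᵥ* G) j = 0)
    (hZ : #Zᶜ ≤ d + 1) :
    (↑(Zᶜ) : Set ι).PairwiseDisjoint fun j =>
      LinearMap.ker ((LinearMap.proj j).comp (G.vecMulLinear.comp V.subtype)) := by
  intro a ha b hb hab
  refine Submodule.disjoint_def.mpr fun v hva hvb => ?_
  simp only [LinearMap.mem_ker, LinearMap.comp_apply, LinearMap.proj_apply,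
    Matrix.vecMulLinear_apply, Submodule.subtype_apply] at hva hvb
  by_contra hv
  have hzero : ∀ j ∈ insert a (insert b Z), ((v : κ → F) ᵥ* G) j = 0 := by
    simp only [mem_insert]
    rintro j (rfl | rfl | hj)
    exacts [hva, hvb, hV v v.2 j hj]
  have hcard : #(insert a (insert b Z))ᶜ + 2 = #Zᶜ := by
    have h := card_insert_of_notMem (a := a) (s := insert b Z) (by simp_all)
    rw [card_insert_of_notMem (mem_compl.mp hb)] at h
    have := card_compl_add_card (insert a (insert b Z))
    have := card_compl_add_card Z
    omega
  have := (hdist v (by simpa using hv)).trans (hammingNorm_le_card_compl hzero)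
  omega
end

theorem no_repeated_columns_general (q : ℕ) (hq : q = 2 ∨ q = 3) (k : ℕ) (hk : 4 ≤ k)
    (G : Matrix (Fin k) (Fin (2 * k)) (ZMod q))
    (hdist : ∀ u : Fin k → ZMod q, u ≠ 0 → k ≤ hammingNorm (Matrix.vecMul u G)) :
    ∀ j1 j2 : Fin (2 * k), j1 ≠ j2 → (fun i => G i j1) ≠ (fun i => G i j2) := by
  intro j1 j2 hne hcol
  have : Fact q.Prime := ⟨by rcases hq with rfl | rfl <;> norm_num⟩
  obtain ⟨T, hj1T, hTj2, hT⟩ : ∃ T, {j1} ⊆ T ∧ T ⊆ univ.erase j2 ∧ #T = k - 2 :=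
    exists_subsuperset_card_eq (by simpa using hne) (by rw [card_singleton]; omega)
      (by rw [card_erase_of_mem (mem_univ _), card_univ, Fintype.card_fin]; omega)
  have hV : 2 ≤ finrank (ZMod q) (vanishingMessages G T) := by
    have := card_sub_card_le_finrank_vanishingMessages G T
    rw [Fintype.card_fin, hT] at this
    omega
  have hZ : ∀ u ∈ vanishingMessages G T, ∀ j ∈ insert j2 T, (u ᵥ* G) j = 0 := by
    intro u hu j hj
    rw [mem_vanishingMessages] at hu
    obtain rfl | hj := mem_insert.mp hj
    -- `(u ᵥ* G) j` is the dot product of `u` with the `j`-th column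
    · exact (congrArg (u ⬝ᵥ ·) hcol).symm.trans (hu j1 (hj1T (mem_singleton_self j1)))
    · exact hu j hj
  have hZc : #(insert j2 T)ᶜ = k + 1 := by
    have := card_compl_add_card (insert j2 T)
    rw [card_insert_of_notMem fun h => by simpa using hTj2 h, hT, Fintype.card_fin] at this
    omega
  have := card_le_card_add_one_of_pairwiseDisjoint_ker hV _ _
    (pairwiseDisjoint_ker_vecMul_apply hdist hZ hZc.le)
  rw [hZc, ZMod.card] at this
  rcases hq with rfl | rfl <;> omega

/-- For `q ∈ {2,3}` and `k ≥ 4`, a generator matrix of a `[2k, k, k]_q` linear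
code has no repeated columns. -/
theorem no_repeated_columns (q : ℕ) (hq : q = 2 ∨ q = 3) (k : ℕ) (hk : 4 ≤ k)
    (G : Matrix (Fin k) (Fin (2 * k)) (ZMod q))
    (hindep : LinearIndependent (ZMod q) (fun i => G i))
    (hdist : ∀ u : Fin k → ZMod q, u ≠ 0 → k ≤ hammingNorm (Matrix.vecMul u G))
    (hmin : ∃ u : Fin k → ZMod q, u ≠ 0 ∧ hammingNorm (Matrix.vecMul u G) = k) :
    ∀ j1 j2 : Fin (2 * k), j1 ≠ j2 → (fun i => G i j1) ≠ (fun i => G i j2) :=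
  no_repeated_columns_general q hq k hk G hdist
end

section
/- Let G = (I_k | M) be a systematic generator matrix of a [2k, k, k]_q code with q ∈ {2,3}. Then there do not exist two distinct row indices i, j and three distinct columns of M whose entries agree in rows i and j simultaneously. -/
/-!
Suppose rows `i ≠ j` of `M` agree on three distinct columns, i.e. the pair `(M i c, M j c)`
is one and the same vector `(x, y)` for these columns. Over a nontrivial commutative ring some
`(a, b) ≠ 0` satisfies `a x + b y = 0` (take `(y, -x)`, or `(1, 0)` if `x = 0`), and then the
codeword `a G_i + b G_j` is nonzero, has weight at most `2` on the identity block and vanishes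
on the three columns of `M`, so its weight is at most `2 + (k - 3) < k`.
-/

open Finset Matrix

section HammingNorm

variable {ι : Type*} [Fintype ι] {α : Type*} [Zero α] [DecidableEq α]

theorem hammingNorm_le_card_of_eq_zero_of_notMem {f : ι → α} {s : Finset ι}
    (hf : ∀ x ∉ s, f x = 0) : hammingNorm f ≤ #s :=
  card_le_card fun x hx => by
    by_contra hxs
    exact (mem_filter.mp hx).2 (hf x hxs)

theorem hammingNorm_le_card_sub_card_of_eq_zero [DecidableEq ι] {f : ι → α} {s : Finset ι}
    (hf : ∀ x ∈ s, f x = 0) : hammingNorm f ≤ Fintype.card ι - #s := by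
  rw [← card_compl]
  exact hammingNorm_le_card_of_eq_zero_of_notMem fun x hx => hf x (by simpa using hx)

theorem hammingNorm_sum_elim {κ : Type*} [Fintype κ] (f : ι → α) (g : κ → α) :
    hammingNorm (Sum.elim f g) = hammingNorm f + hammingNorm g := by
  simp only [hammingNorm, card_filter, Fintype.sum_sum_type, Sum.elim_inl, Sum.elim_inr]
  congr!

end HammingNorm

theorem exists_ne_zero_mul_add_mul_eq_zero {R : Type*} [CommRing R] [Nontrivial R] (x y : R) :
    ∃ a b : R, (a ≠ 0 ∨ b ≠ 0) ∧ a * x + b * y = 0 := by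
  by_cases hx : x = 0
  · exact ⟨1, 0, .inl one_ne_zero, by simp [hx]⟩
  · exact ⟨y, -x, .inr (neg_ne_zero.mpr hx), by ring⟩

section Systematic

variable {R : Type*} [CommRing R] {ι κ : Type*} [DecidableEq ι]

theorem hammingNorm_vecMul_fromCols_one [DecidableEq R] [Fintype ι] [Fintype κ]
    (M : Matrix ι κ R) (u : ι → R) :
    hammingNorm (u ᵥ* fromCols (1 : Matrix ι ι R) M) =
      hammingNorm u + hammingNorm (u ᵥ* M) := by
  rw [vecMul_fromCols, vecMul_one, hammingNorm_sum_elim]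

theorem single_add_single_vecMul [Fintype ι] (M : Matrix ι κ R) (i j : ι) (a b : R) :
    (Pi.single i a + Pi.single j b) ᵥ* M = a • M.row i + b • M.row j := by
  rw [add_vecMul, single_vecMul, single_vecMul]

theorem hammingNorm_single_add_single_le [DecidableEq R] [Fintype ι] (i j : ι) (a b : R) :
    hammingNorm (Pi.single i a + Pi.single j b : ι → R) ≤ 2 :=
  (hammingNorm_le_card_of_eq_zero_of_notMem (s := {i, j}) fun x hx => by
    simp only [mem_insert, mem_singleton, not_or] at hx
    simp [hx.1, hx.2]).trans card_le_two

theorem single_add_single_ne_zero {i j : ι} (hij : i ≠ j) {a b : R} (hab : a ≠ 0 ∨ b ≠ 0) :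
    (Pi.single i a + Pi.single j b : ι → R) ≠ 0 := by
  intro h
  have hi := congrFun h i
  have hj := congrFun h j
  simp only [Pi.add_apply, Pi.single_eq_same, Pi.single_eq_of_ne hij,
    Pi.single_eq_of_ne hij.symm, Pi.zero_apply, add_zero, zero_add] at hi hj
  exact hab.elim (· hi) (· hj)

theorem exists_ne_zero_hammingNorm_vecMul_fromCols_one_le [Nontrivial R] [DecidableEq R]
    [Fintype ι] [Fintype κ] [DecidableEq κ]
    (M : Matrix ι κ R) {i j : ι} (hij : i ≠ j) {s : Finset κ} {c₀ : κ}
    (hi : ∀ c ∈ s, M i c = M i c₀) (hj : ∀ c ∈ s, M j c = M j c₀) :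
    ∃ u : ι → R, u ≠ 0 ∧
      hammingNorm (u ᵥ* fromCols (1 : Matrix ι ι R) M) ≤ 2 + (Fintype.card κ - #s) := by
  obtain ⟨a, b, hab, hzero⟩ := exists_ne_zero_mul_add_mul_eq_zero (M i c₀) (M j c₀)
  refine ⟨Pi.single i a + Pi.single j b, single_add_single_ne_zero hij hab, ?_⟩
  rw [hammingNorm_vecMul_fromCols_one]
  refine add_le_add (hammingNorm_single_add_single_le i j a b)
    (hammingNorm_le_card_sub_card_of_eq_zero fun c hc => ?_)
  simp [single_add_single_vecMul, hi c hc, hj c hc, hzero]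

end Systematic

theorem systematic_no_three_agreeing_columns_general (q : ℕ) (hq : q = 2 ∨ q = 3) (k : ℕ)
    (M : Matrix (Fin k) (Fin k) (ZMod q))
    (G : Matrix (Fin k) (Fin k ⊕ Fin k) (ZMod q))
    (hG : G = Matrix.fromCols 1 M)
    (hdist : ∀ u : Fin k → ZMod q, u ≠ 0 → k ≤ hammingNorm (Matrix.vecMul u G)) :
    ∀ i j : Fin k, i ≠ j → ∀ c1 c2 c3 : Fin k, c1 ≠ c2 → c1 ≠ c3 → c2 ≠ c3 →
      ¬(M i c1 = M i c2 ∧ M j c1 = M j c2 ∧ M i c2 = M i c3 ∧ M j c2 = M j c3) := by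
  intro i j hij c1 c2 c3 h12 h13 h23 ⟨e1, e2, e3, e4⟩
  have : Nontrivial (ZMod q) := by
    rcases hq with rfl | rfl <;> infer_instance
  have hcard : #{c1, c2, c3} = 3 := card_eq_three.mpr ⟨c1, c2, c3, h12, h13, h23, rfl⟩
  have hk : 3 ≤ k := by simpa [hcard] using card_le_univ ({c1, c2, c3} : Finset (Fin k))
  obtain ⟨u, hu, hweight⟩ := exists_ne_zero_hammingNorm_vecMul_fromCols_one_le M hij
    (s := {c1, c2, c3}) (c₀ := c1) (by simp [e1, e3]) (by simp [e2, e4])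
  have hlow := hdist u hu
  rw [hG] at hlow
  rw [hcard, Fintype.card_fin] at hweight
  omega

/-- Let `G = (I_k | M)` be a systematic generator matrix of a `[2k, k, k]_q`
code with `q ∈ {2,3}`.  Then there are no two distinct rows `i, j` and three
distinct columns of `M` whose entries agree in rows `i` and `j`. -/
theorem systematic_no_three_agreeing_columns (q : ℕ) (hq : q = 2 ∨ q = 3) (k : ℕ)
    (M : Matrix (Fin k) (Fin k) (ZMod q))
    (G : Matrix (Fin k) (Fin k ⊕ Fin k) (ZMod q))
    (hG : G = Matrix.fromCols 1 M)
    (hdist : ∀ u : Fin k → ZMod q, u ≠ 0 → k ≤ hammingNorm (Matrix.vecMul u G))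
    (hmin : ∃ u : Fin k → ZMod q, u ≠ 0 ∧ hammingNorm (Matrix.vecMul u G) = k) :
    ∀ i j : Fin k, i ≠ j → ∀ c1 c2 c3 : Fin k, c1 ≠ c2 → c1 ≠ c3 → c2 ≠ c3 →
      ¬(M i c1 = M i c2 ∧ M j c1 = M j c2 ∧ M i c2 = M i c3 ∧ M j c2 = M j c3) :=
  systematic_no_three_agreeing_columns_general q hq k M G hG hdist
end

section
/- If the multiplication tensor of a finite field or finite presemifield of order q^n admits a tensor decomposition of rank r as T = Σ_{i=1}^r L_i ⊗ R_i ⊗ P_i, then the n×r matrix whose columns are the vectors P_i (equivalently the matrix P) is a generator matrix of a linear code over F_q of length r, dimension n, and minimum distance at least n (and the same holds for L^T and R^T). -/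
open Matrix

section Aux

variable {F : Type*} [Field F] [DecidableEq F] {n r : ℕ}

lemma bd_norm_eq_card (c : Fin r → F) :
    Fintype.card {i // c i ≠ 0} = hammingNorm c := by
  rw [hammingNorm]
  exact Fintype.card_subtype _

lemma bd_diagmul (A : Matrix (Fin r) (Fin n) F) (c : Fin r → F) (y : Fin n → F) :
    (Matrix.diagonal c * A).mulVec y = fun i => c i * A.mulVec y i := by
  funext i
  rw [← Matrix.mulVec_mulVec, Matrix.mulVec_diagonal]

lemma bd_sandwich (P : Matrix (Fin n) (Fin r) F) (c : Fin r → F)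
    (R : Matrix (Fin r) (Fin n) F) (y : Fin n → F) :
    (P * Matrix.diagonal c * R).mulVec y
      = P.mulVec (fun i => c i * R.mulVec y i) := by
  rw [Matrix.mul_assoc, ← Matrix.mulVec_mulVec, bd_diagmul]

/-- If `y ↦ P (c ∘ R y)` is injective then `c` has Hamming weight `≥ n`. -/
lemma bd_key (P : Matrix (Fin n) (Fin r) F) (c : Fin r → F)
    (R : Matrix (Fin r) (Fin n) F)
    (hinj : ∀ y : Fin n → F, P.mulVec (fun i => c i * R.mulVec y i) = 0 → y = 0) :
    n ≤ hammingNorm c := by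
  set M := P * Matrix.diagonal c * R with hM
  have hker : ∀ y, M.mulVec y = 0 → y = 0 := by
    intro y hy
    exact hinj y (by rw [← bd_sandwich]; exact hy)
  have hinj' : Function.Injective M.mulVecLin := by
    rw [← LinearMap.ker_eq_bot, LinearMap.ker_eq_bot']
    intro y hy
    exact hker y hy
  have hrank : M.rank = n := by
    rw [Matrix.rank, LinearMap.finrank_range_of_inj hinj', Module.finrank_pi]
    simp
  have h1 : M.rank ≤ (P * Matrix.diagonal c).rank := Matrix.rank_mul_le_left _ _
  have h2 : (P * Matrix.diagonal c).rank ≤ (Matrix.diagonal c).rank :=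
    Matrix.rank_mul_le_right _ _
  have h3 : (Matrix.diagonal c).rank = hammingNorm c := by
    rw [Matrix.rank_diagonal, bd_norm_eq_card]
  omega

/-- If a matrix has rank `< n` (as a map from `F^n`), its kernel is nontrivial. -/
lemma bd_ker_nontrivial (A : Matrix (Fin r) (Fin n) F) (hA : A.rank < n) :
    ∃ x : Fin n → F, x ≠ 0 ∧ A.mulVec x = 0 := by
  have h := LinearMap.finrank_range_add_finrank_ker A.mulVecLin
  rw [Module.finrank_pi] at h
  simp only [Fintype.card_fin] at h
  have hk : 0 < Module.finrank F (LinearMap.ker A.mulVecLin) := by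
    have : Matrix.rank A = Module.finrank F (LinearMap.range A.mulVecLin) := rfl
    omega
  rw [Module.finrank_pos_iff_exists_ne_zero] at hk
  obtain ⟨⟨x, hx⟩, hx0⟩ := hk
  exact ⟨x, by simpa [Ne, Submodule.mk_eq_zero] using hx0, hx⟩

end Aux

/-- Brockett–Dobkin: if the multiplication tensor of a finite field or finite
presemifield of order `q^n` admits a rank-`r` decomposition `(L, R, P)`, then
`L^T`, `R^T` and `P` are generator matrices of `[r, n, ≥ n]_q` linear codes. -/
theorem brockett_dobkin (F : Type*) [Field F] [Fintype F] [DecidableEq F]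
    (n r : ℕ) (hn : 1 ≤ n)
    (L R : Matrix (Fin r) (Fin n) F) (P : Matrix (Fin n) (Fin r) F)
    (hpre : ∀ x y : Fin n → F,
      P.mulVec (fun i => L.mulVec x i * R.mulVec y i) = 0 → x = 0 ∨ y = 0) :
    (LinearIndependent F (fun j => (Matrix.transpose L) j) ∧
      ∀ u : Fin n → F, u ≠ 0 → n ≤ hammingNorm (L.mulVec u)) ∧
    (LinearIndependent F (fun j => (Matrix.transpose R) j) ∧
      ∀ u : Fin n → F, u ≠ 0 → n ≤ hammingNorm (R.mulVec u)) ∧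
    (LinearIndependent F (fun j => P j) ∧
      ∀ u : Fin n → F, u ≠ 0 → n ≤ hammingNorm (Matrix.vecMul u P)) := by
  -- distance bounds for L and R
  have hLdist : ∀ u : Fin n → F, u ≠ 0 → n ≤ hammingNorm (L.mulVec u) := by
    intro u hu
    refine bd_key P (L.mulVec u) R ?_
    intro y hy
    rcases hpre u y hy with h | h
    · exact absurd h hu
    · exact h
  have hRdist : ∀ u : Fin n → F, u ≠ 0 → n ≤ hammingNorm (R.mulVec u) := by
    intro u hu
    refine bd_key P (R.mulVec u) L ?_
    intro x hx
    have hx' : P.mulVec (fun i => L.mulVec x i * R.mulVec u i) = 0 := by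
      have heq : (fun i => L.mulVec x i * R.mulVec u i)
          = fun i => R.mulVec u i * L.mulVec x i := by
        funext i; rw [mul_comm]
      rw [heq]; exact hx
    rcases hpre x u hx' with h | h
    · exact h
    · exact absurd h hu
  -- injectivity of mulVec for L and R
  have hLinj : ∀ u : Fin n → F, L.mulVec u = 0 → u = 0 := by
    intro u hu
    by_contra h
    have := hLdist u h
    rw [hu, hammingNorm_zero] at this
    omega
  have hRinj : ∀ u : Fin n → F, R.mulVec u = 0 → u = 0 := by
    intro u hu
    by_contra h
    have := hRdist u h
    rw [hu, hammingNorm_zero] at this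
    omega
  -- distance bound for P
  have hPdist : ∀ u : Fin n → F, u ≠ 0 → n ≤ hammingNorm (Matrix.vecMul u P) := by
    intro u hu
    by_contra hlt
    push_neg at hlt
    set c : Fin r → F := Matrix.vecMul u P with hc
    -- find x ≠ 0 with c i * (L x) i = 0 for all i
    have hrk : (Matrix.diagonal c * L).rank < n := by
      calc (Matrix.diagonal c * L).rank ≤ (Matrix.diagonal c).rank :=
            Matrix.rank_mul_le_left _ _
        _ = hammingNorm c := by rw [Matrix.rank_diagonal, bd_norm_eq_card]
        _ < n := hlt
    obtain ⟨x, hx0, hx⟩ := bd_ker_nontrivial _ hrk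
    have hxc : ∀ i, c i * L.mulVec x i = 0 := by
      intro i
      have := congrFun hx i
      rw [← Matrix.mulVec_mulVec, Matrix.mulVec_diagonal] at this
      exact this
    -- multiplication by x on the left is injective, hence surjective
    have hinjx : Function.Injective
        (P.mulVecLin ∘ₗ (Matrix.diagonal (L.mulVec x) * R).mulVecLin) := by
      rw [← LinearMap.ker_eq_bot, LinearMap.ker_eq_bot']
      intro y hy
      have hy' : P.mulVec (fun i => L.mulVec x i * R.mulVec y i) = 0 := by
        have h0 : P.mulVec ((Matrix.diagonal (L.mulVec x) * R).mulVec y) = 0 := hy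
        rw [bd_diagmul] at h0
        exact h0
      rcases hpre x y hy' with h | h
      · exact absurd h hx0
      · exact h
    have hsurjx : Function.Surjective
        (P.mulVecLin ∘ₗ (Matrix.diagonal (L.mulVec x) * R).mulVecLin) :=
      LinearMap.surjective_of_injective hinjx
    -- pick target z with ⟪u, z⟫ ≠ 0
    obtain ⟨j, hj⟩ : ∃ j, u j ≠ 0 := by
      by_contra h
      push_neg at h
      exact hu (funext h)
    obtain ⟨y, hy⟩ := hsurjx (Pi.single j 1)
    have hdot : dotProduct u (Pi.single j 1) ≠ 0 := by
      rw [dotProduct]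
      simp [Pi.single_apply, hj]
    apply hdot
    rw [← hy]
    have : (P.mulVecLin ∘ₗ (Matrix.diagonal (L.mulVec x) * R).mulVecLin) y
        = P.mulVec (fun i => L.mulVec x i * R.mulVec y i) := by
      show P.mulVec ((Matrix.diagonal (L.mulVec x) * R).mulVec y) = _
      rw [bd_diagmul]
    rw [this, Matrix.dotProduct_mulVec]
    rw [dotProduct]
    apply Finset.sum_eq_zero
    intro i _
    rw [show L.mulVec x i * R.mulVec y i = L.mulVec x i * R.mulVec y i from rfl]
    have : c i * (L.mulVec x i * R.mulVec y i) = 0 := by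
      rw [← mul_assoc, hxc i, zero_mul]
    exact this
  have hPinj : ∀ u : Fin n → F, Matrix.vecMul u P = 0 → u = 0 := by
    intro u hu
    by_contra h
    have := hPdist u h
    rw [hu, hammingNorm_zero] at this
    omega
  refine ⟨⟨?_, hLdist⟩, ⟨?_, hRdist⟩, ⟨?_, hPdist⟩⟩
  · rw [Fintype.linearIndependent_iff]
    intro g hg j
    have : L.mulVec g = 0 := by
      ext k
      have := congrFun hg k
      simpa [Matrix.mulVec, dotProduct, Matrix.transpose_apply,
        mul_comm] using this
    exact congrFun (hLinj g this) j
  · rw [Fintype.linearIndependent_iff]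
    intro g hg j
    have : R.mulVec g = 0 := by
      ext k
      have := congrFun hg k
      simpa [Matrix.mulVec, dotProduct, Matrix.transpose_apply,
        mul_comm] using this
    exact congrFun (hRinj g this) j
  · rw [Fintype.linearIndependent_iff]
    intro g hg j
    have : Matrix.vecMul g P = 0 := by
      ext k
      have := congrFun hg k
      simpa [Matrix.vecMul, dotProduct] using this
    exact congrFun (hPinj g this) j
end

section
/- Montgomery's rank-13 bilinear identity for degree-4 polynomial multiplication is correct: with the 13 products p0,...,p12 defined by the given linear forms in a0,...,a4 and b0,...,b4, the explicit linear combinations recover all 9 coefficients c0,...,c8 of (a0+a1X+...+a4X^4)(b0+b1X+...+b4X^4), over any commutative ring. -/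
open Polynomial

/-- Montgomery's rank-13 bilinear identity for degree-4 polynomial
multiplication, over any commutative ring. -/
theorem montgomery_rank13 (R : Type*) [CommRing R]
    (a0 a1 a2 a3 a4 b0 b1 b2 b3 b4 : R)
    (x7 x9 l0 l1 l2 l3 l4 l5 l6 l7 l8 l9 l10 l11 l12 : R)
    (y7 y9 r0 r1 r2 r3 r4 r5 r6 r7 r8 r9 r10 r11 r12 : R)
    (p0 p1 p2 p3 p4 p5 p6 p7 p8 p9 p10 p11 p12 : R)
    (z15 z16 k2 k3 k4 k5 k9 k10 k11 c0 c1 c2 c3 c4 c5 c6 c7 c8 : R)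
    (hl7 : l7 = a0 + a1) (hl8 : l8 = a0 - a4) (hl6 : l6 = a4 + a3)
    (hl3 : l3 = l7 - l6) (hx7 : x7 = a2 + l7) (hl0 : l0 = l6 + x7)
    (hx9 : x9 = l6 + a2) (hl1 : l1 = a0 - x9) (hl2 : l2 = x7 - a4)
    (hl4 : l4 = l1 + a4) (hl5 : l5 = l2 - a0) (hl9 : l9 = a4)
    (hl10 : l10 = a3) (hl11 : l11 = a1) (hl12 : l12 = a0)
    (hr7 : r7 = b0 + b1) (hr8 : r8 = b0 - b4) (hr6 : r6 = b4 + b3)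
    (hr3 : r3 = r7 - r6) (hy7 : y7 = b2 + r7) (hr0 : r0 = r6 + y7)
    (hy9 : y9 = r6 + b2) (hr1 : r1 = b0 - y9) (hr2 : r2 = y7 - b4)
    (hr4 : r4 = r1 + b4) (hr5 : r5 = r2 - b0) (hr9 : r9 = b4)
    (hr10 : r10 = b3) (hr11 : r11 = b1) (hr12 : r12 = b0)
    (hp0 : p0 = l0 * r0) (hp1 : p1 = l1 * r1) (hp2 : p2 = l2 * r2)
    (hp3 : p3 = l3 * r3) (hp4 : p4 = l4 * r4) (hp5 : p5 = l5 * r5)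
    (hp6 : p6 = l6 * r6) (hp7 : p7 = l7 * r7) (hp8 : p8 = l8 * r8)
    (hp9 : p9 = l9 * r9) (hp10 : p10 = l10 * r10) (hp11 : p11 = l11 * r11)
    (hp12 : p12 = l12 * r12)
    (hz15 : z15 = p1 + p10 - p8) (hz16 : z16 = p2 + p11 - p8)
    (hk2 : k2 = p6 - p10) (hk3 : k3 = p7 - p11) (hk4 : k4 = z15 - p4)
    (hk5 : k5 = z16 - p5) (hk9 : k9 = p12 + p9) (hk10 : k10 = k2 + z15 - p3)
    (hk11 : k11 = p3 + p0 - k3 - z16)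
    (hc7 : c7 = k2 - p9) (hc1 : c1 = k3 - p12) (hc6 : c6 = k4 + k9 - k2)
    (hc2 : c2 = k5 + k9 - k3) (hc5 : c5 = k11 - (k4 + p9) * 2 - p12 * 3)
    (hc4 : c4 = k4 + k5 + k9 * 3 + k10 - k11)
    (hc3 : c3 = p0 - k10 - (k5 + p12) * 2 - p9 * 3)
    (hc0 : c0 = p12) (hc8 : c8 = p9) :
    (C a0 + C a1 * X + C a2 * X ^ 2 + C a3 * X ^ 3 + C a4 * X ^ 4) *
      (C b0 + C b1 * X + C b2 * X ^ 2 + C b3 * X ^ 3 + C b4 * X ^ 4) =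
    C c0 + C c1 * X + C c2 * X ^ 2 + C c3 * X ^ 3 + C c4 * X ^ 4
      + C c5 * X ^ 5 + C c6 * X ^ 6 + C c7 * X ^ 7 + C c8 * X ^ 8 := by
  subst_vars
  simp only [map_add, map_sub, map_mul, map_ofNat, C_1]
  ring
end

section
/- The rank-11 bilinear algorithm for multiplication in F_{3^5} = F_3[X]/(X^5 - X + 1) is correct: with the 11 products p0,...,p10 defined by the given linear forms in a0,...,a4 and b0,...,b4 over F_3, the stated linear combinations c0,...,c4 equal the coefficients of (Σ a_i X^i)(Σ b_j X^j) reduced modulo X^5 - X + 1 over F_3. -/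
open Polynomial

/-- Correctness of the rank-11 bilinear algorithm for multiplication in
`F_{3^5} = F_3[X]/(X^5 - X + 1)`. -/
theorem rank11_F243 (a0 a1 a2 a3 a4 b0 b1 b2 b3 b4 : ZMod 3)
    (x6 l0 l1 l2 l3 l4 l5 l6 l7 l8 l9 l10 : ZMod 3)
    (y6 r0 r1 r2 r3 r4 r5 r6 r7 r8 r9 r10 : ZMod 3)
    (p0 p1 p2 p3 p4 p5 p6 p7 p8 p9 p10 : ZMod 3)
    (n1 k16 q5 q2 z7 n5 n7 c0 c1 c2 c3 c4 : ZMod 3)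
    (hl7 : l7 = a3 - a4) (hx6 : x6 = a1 + a0) (hl1 : l1 = x6 - a2)
    (hl5 : l5 = a1 - a4) (hl0 : l0 = a0 + a2) (hl2 : l2 = a0 - a3)
    (hl3 : l3 = l1 - a3) (hl6 : l6 = a2 - a3 + l5) (hl8 : l8 = a1 - l7)
    (hl9 : l9 = x6 - l7) (hl10 : l10 = a2 + l7) (hl4 : l4 = a4)
    (hr7 : r7 = b3 - b4) (hy6 : y6 = b1 + b0) (hr1 : r1 = y6 - b2)
    (hr5 : r5 = b1 - b4) (hr0 : r0 = b0 + b2) (hr2 : r2 = b0 - b3)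
    (hr3 : r3 = r1 - b3) (hr6 : r6 = b2 - b3 + r5) (hr8 : r8 = b1 - r7)
    (hr9 : r9 = y6 - r7) (hr10 : r10 = b2 + r7) (hr4 : r4 = b4)
    (hp0 : p0 = l0 * r0) (hp1 : p1 = l1 * r1) (hp2 : p2 = l2 * r2)
    (hp3 : p3 = l3 * r3) (hp4 : p4 = l4 * r4) (hp5 : p5 = l5 * r5)
    (hp6 : p6 = l6 * r6) (hp7 : p7 = l7 * r7) (hp8 : p8 = l8 * r8)
    (hp9 : p9 = l9 * r9) (hp10 : p10 = l10 * r10)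
    (hn1 : n1 = p7 + p6) (hk16 : k16 = p3 - n1) (hq5 : q5 = p5 + k16)
    (hq2 : q2 = p2 + k16) (hz7 : z7 = p1 - q5) (hn5 : n5 = p8 + q2 + p1)
    (hc3 : c3 = z7 - p10 - p4) (hc1 : c1 = q2 + p0 - z7)
    (hn7 : n7 = p0 - p10 - n5) (hc0 : c0 = p4 - p7 - p3 - q5 + n5)
    (hc4 : c4 = p9 - n7) (hc2 : c2 = n7 + n1 - q5) :
    (X ^ 5 - X + 1 : Polynomial (ZMod 3)) ∣
      ((C a0 + C a1 * X + C a2 * X ^ 2 + C a3 * X ^ 3 + C a4 * X ^ 4) *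
        (C b0 + C b1 * X + C b2 * X ^ 2 + C b3 * X ^ 3 + C b4 * X ^ 4) -
       (C c0 + C c1 * X + C c2 * X ^ 2 + C c3 * X ^ 3 + C c4 * X ^ 4)) := by
  subst_vars
  refine ⟨C a1 * C r4 * X ^ 0 + C a2 * C b3 * X ^ 0 + C a3 * C b2 * X ^ 0 + C l4 * C b1 * X ^ 0 + C a2 * C r4 * X ^ 1 + C a3 * C b3 * X ^ 1 + C l4 * C b2 * X ^ 1 + C a3 * C r4 * X ^ 2 + C l4 * C b3 * X ^ 2 + C l4 * C r4 * X ^ 3, ?_⟩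
  have h3 : (3 : Polynomial (ZMod 3)) = 0 := by
    rw [← map_ofNat (Polynomial.C : ZMod 3 →+* Polynomial (ZMod 3)) 3,
      show ((3 : ZMod 3)) = 0 from rfl, map_zero]
  simp only [map_add, map_sub, map_mul]
  linear_combination -(X ^ 0 * (C a1 * C r4 + C l4 * C b1) + X ^ 1 * (C a0 * C b0 + (-1) * C a0 * C b3 + (-1) * C a1 * C b2 + (-1) * C a2 * C b1 + C a2 * C b3 + C a2 * C r4 + (-1) * C a3 * C b0 + C a3 * C b2 + C l4 * C b2 + (-1) * C l4 * C r4) + X ^ 2 * ((-1) * C a0 * C b0 + (-1) * C a0 * C b1 + C a0 * C b2 + C a0 * C b3 + (-1) * C a1 * C b0 + (-1) * C a1 * C b1 + (2) * C a1 * C b2 + (-1) * C a1 * C r4 + C a2 * C b0 + (2) * C a2 * C b1 + (-2) * C a2 * C b3 + (-1) * C a2 * C r4 + C a3 * C b0 + (-2) * C a3 * C b2 + C a3 * C r4 + (-1) * C l4 * C b1 + (-1) * C l4 * C b2 + C l4 * C b3 + C l4 * C r4) + X ^ 3 * ((-1) * C a2 * C b3 + (-1) * C a3 * C b2) + X ^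 4 * (C a0 * C b0 + C a0 * C b1 + (-1) * C a0 * C b2 + (-1) * C a0 * C b3 + C a1 * C b0 + C a1 * C b1 + (-1) * C a1 * C b2 + (-1) * C a1 * C b3 + C a1 * C r4 + (-1) * C a2 * C b0 + (-1) * C a2 * C b1 + C a2 * C b3 + (-1) * C a3 * C b0 + (-1) * C a3 * C b1 + C a3 * C b2 + C a3 * C b3 + (-1) * C a3 * C r4 + C l4 * C b1 + (-1) * C l4 * C b3)) * h3
end
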